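/- Non-approximability gap instance property: for all integers r ≥ 1 and any 3-Partition instance M = {a₁,…,a_{3n}} with sum nT and T/4 < a_i < T/2, consider the pair (G_{M,r}, Q_{M,r}) from the scaled reduction (3n disjoint paths, the i-th with r·a_i red capacity-1 buses followed by r·a_i green capacity-1 buses; queue (red^{rT} green^{rT})^n). Let s₀ be the least s such that (G_{M,r}, Q_{M,r}, ε^s) is solvable. Then: M has a 3-partition into triples of sum T implies s₀ = 1, and M has no such 3-partition implies s₀ > r. -/

import Mathlib

/-- A Bus Out configuration: a congestion graph (vertex set `V`, blocking
relation `edge`, labels `(color, capacity)`), a passenger queue `Q` (list of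
colors), and a tuple `S` of parking spots, each empty (`none`) or holding a
bus `(color, remaining seats)`. -/
structure Config where
  V : Finset ℕ
  edge : ℕ → ℕ → Bool
  label : ℕ → ℕ × ℕ
  Q : List ℕ
  S : List (Option (ℕ × ℕ))

/-- A bus is free if no bus in the graph blocks it (out-degree zero). -/
def Config.Free (C : Config) (v : ℕ) : Prop :=
  v ∈ C.V ∧ ∀ w ∈ C.V, ¬ C.edge v w

/-- Player transition: move a free bus onto an empty spot. -/
def PlayerStep (C C' : Config) : Prop :=
  ∃ v i, C.Free v ∧ C.S[(i : ℕ)]? = some none ∧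
    C' = { C with V := C.V.erase v, S := C.S.set i (some (C.label v)) }

/-- Automatic transition: the head passenger boards a matching-colored bus on
a spot; the bus departs (spot becomes empty) when it has no seat left. -/
def AutoStep (C C' : Config) : Prop :=
  ∃ x Q' i k, C.Q = x :: Q' ∧ C.S[(i : ℕ)]? = some (some (x, k)) ∧
    C' = { C with Q := Q', S := C.S.set i (if k ≤ 1 then none else some (x, k - 1)) }

def AutoApplicable (C : Config) : Prop := ∃ C', AutoStep C C'

/-- A transition: automatic transitions are forced before player moves. -/
def Step (C C' : Config) : Prop :=
  (¬ AutoApplicable C ∧ PlayerStep C C') ∨ AutoStep C C'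

/-- The empty configuration: no buses, no passengers, all spots empty. -/
def Config.IsEmpty (C : Config) : Prop :=
  C.V = ∅ ∧ C.Q = [] ∧ ∀ sp ∈ C.S, sp = none

/-- Solvable: the empty configuration is reachable by transitions. -/
def Solvable (C : Config) : Prop :=
  ∃ C', Relation.ReflTransGen Step C C' ∧ C'.IsEmpty

/-- Acyclicity of the congestion graph (restricted to its vertex set). -/
def Config.Acyclic (C : Config) : Prop :=
  ∀ v, ¬ Relation.TransGen (fun u w => u ∈ C.V ∧ w ∈ C.V ∧ C.edge u w) v v

/-- Remaining seats of color `x` offered by a parking spot. -/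
def spotSeats (x : ℕ) (sp : Option (ℕ × ℕ)) : ℕ :=
  match sp with
  | some (y, k) => if y = x then k else 0
  | none => 0

/-- Total remaining capacity of color `x` over buses in the graph and spots. -/
def Config.capOf (C : Config) (x : ℕ) : ℕ :=
  (C.V.filter (fun v => (C.label v).1 = x)).sum (fun v => (C.label v).2)
  + (C.S.map (spotSeats x)).sum

/-- Eligibility: acyclic graph and, for every color, the number of passengers
equals the total remaining capacity of buses of that color. -/
def Config.Eligible (C : Config) : Prop :=
  C.Acyclic ∧ ∀ x, C.Q.count x = C.capOf x

/-- Well-formedness: all capacities / remaining seat counts are positive. -/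
def Config.WF (C : Config) : Prop :=
  (∀ v ∈ C.V, 1 ≤ (C.label v).2) ∧ ∀ sp ∈ C.S, ∀ x k, sp = some (x, k) → 1 ≤ k

/-- Colors occurring in the configuration (buses, queue, and spots). -/
def colorSet (C : Config) : Finset ℕ :=
  (C.V.image fun v => (C.label v).1) ∪ C.Q.toFinset
    ∪ ((C.S.filterMap id).map Prod.fst).toFinset

/-- A 3-partition of `a 0, …, a (3n-1)` into `n` triples each summing to `T`. -/
def HasPartition (n T : ℕ) (a : ℕ → ℕ) : Prop :=
  ∃ f : ℕ → ℕ, (∀ i < 3 * n, f i < n) ∧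
    ∀ g < n, ((Finset.range (3 * n)).filter (fun i => f i = g)).card = 3 ∧
      ((Finset.range (3 * n)).filter (fun i => f i = g)).sum a = T

/-- The (scaled) configuration reduced from a 3-Partition instance: `3n`
disjoint directed paths, the `i`-th consisting of `r * a i` red (color `0`)
capacity-1 buses followed by `r * a i` green (color `1`) capacity-1 buses
(each bus blocked by the next one to be dispatched after it), queue
`(red^(rT) green^(rT))^n`, and `s` empty parking spots.
Vertex `Nat.pair i j` is the `j`-th bus of the `i`-th path. -/
def GMconf (n T : ℕ) (a : ℕ → ℕ) (r s : ℕ) : Config where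
  V := (Finset.range (3 * n)).biUnion fun i =>
        (Finset.range (2 * (r * a i))).image fun j => Nat.pair i j
  edge := fun u w => (u.unpair.1 == w.unpair.1) && (u.unpair.2 == w.unpair.2 + 1)
  label := fun v => (if v.unpair.2 < r * a v.unpair.1 then 0 else 1, 1)
  Q := (List.replicate n
          (List.replicate (r * T) 0 ++ List.replicate (r * T) 1)).flatten
  S := List.replicate s none

lemma solve_of_seq (L : List ℕ) : ∀ (C : Config), C.S = [none] →
    (∀ v ∈ C.V, (C.label v).2 = 1) →
    (∀ v, v ∈ C.V ↔ v ∈ L) → L.Nodup →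
    C.Q = L.map (fun v => (C.label v).1) →
    (∀ k, ∀ hk : k < L.length, ∀ w ∈ L.drop k, C.edge (L.get ⟨k, hk⟩) w = false) →
    Solvable C := by
  induction L with
  | nil =>
    intro C hS hcap hmem hnd hQ hfree
    refine ⟨C, .refl, ?_, by simpa using hQ, ?_⟩
    · exact Finset.eq_empty_iff_forall_notMem.2 fun v hv => by simpa using (hmem v).1 hv
    · intro sp hsp; rw [hS] at hsp; simpa using hsp
  | cons v L' ih =>
    intro C hS hcap hmem hnd hQ hfree
    have hv : v ∈ C.V := (hmem v).2 (by simp)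
    have hlab : C.label v = ((C.label v).1, 1) := by
      have := hcap v hv; exact Prod.ext rfl this
    set x := (C.label v).1 with hx
    have hnoauto : ¬ AutoApplicable C := by
      rintro ⟨C', x', Q', i, k, hQ', hsp, -⟩
      rw [hS] at hsp
      rcases i with _ | i <;> simp at hsp
    set C1 : Config := { C with V := C.V.erase v, S := C.S.set 0 (some (C.label v)) } with hC1
    set C2 : Config := { C1 with Q := L'.map (fun v => (C.label v).1), S := [none] } with hC2
    have hstep1 : Step C C1 := by
      refine Or.inl ⟨hnoauto, v, 0, ⟨hv, ?_⟩, by rw [hS]; rfl, rfl⟩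
      intro w hw hedge
      have := hfree 0 (by simp) w (by simpa using (hmem w).1 hw)
      simp only [List.get] at this
      rw [this] at hedge; simp at hedge
    have hstep2 : Step C1 C2 := by
      refine Or.inr ⟨x, L'.map (fun v => (C.label v).1), 0, 1, ?_, ?_, ?_⟩
      · show C.Q = _ ; rw [hQ]; rfl
      · show (C.S.set 0 (some (C.label v)))[0]? = _
        rw [hS, hlab]; rfl
      · show C2 = { C1 with Q := L'.map (fun v => (C.label v).1), S := C1.S.set 0 (if (1:ℕ) ≤ 1 then none else some (x, 1-1)) }
        rw [hC2, hC1]; simp only [hS]; rfl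
    have hsolve2 : Solvable C2 := by
      refine ih C2 rfl (fun w hw => hcap w (Finset.mem_of_mem_erase hw)) ?_
        (List.nodup_cons.1 hnd).2 rfl ?_
      · intro w
        constructor
        · intro hw
          have h1 := (hmem w).1 (Finset.mem_of_mem_erase hw)
          have h2 := Finset.ne_of_mem_erase hw
          simpa [h2] using h1
        · intro hw
          refine Finset.mem_erase.2 ⟨?_, (hmem w).2 (by simp [hw])⟩
          rintro rfl; exact (List.nodup_cons.1 hnd).1 hw
      · intro k hk w hw
        exact hfree (k+1) (by simpa using hk) w hw
    obtain ⟨Cf, hreach, hempty⟩ := hsolve2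
    exact ⟨Cf, .head hstep1 (.head hstep2 hreach), hempty⟩
/-- helper: convert a global pairwise non-edge property to the indexed form -/
lemma free_of_pairwise {E : ℕ → ℕ → Bool} (L : List ℕ)
    (hpw : L.Pairwise (fun u w => E u w = false))
    (hirr : ∀ v ∈ L, E v v = false) :
    ∀ k, ∀ hk : k < L.length, ∀ w ∈ L.drop k, E (L.get ⟨k, hk⟩) w = false := by
  intro k hk w hw
  obtain ⟨⟨m, hm⟩, rfl⟩ := List.mem_iff_get.1 hw
  have hm' : k + m < L.length := by
    have := hm; simp [List.length_drop] at this; omega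
  have he : (L.drop k).get ⟨m, hm⟩ = L.get ⟨k + m, hm'⟩ := by
    simp only [List.get_eq_getElem, List.getElem_drop]
  rw [he]
  rcases Nat.eq_zero_or_pos m with rfl | hmpos
  · have : (⟨k + 0, hm'⟩ : Fin L.length) = ⟨k, hk⟩ := by simp
    rw [this]
    exact hirr _ (List.get_mem _ _)
  · exact List.pairwise_iff_get.1 hpw ⟨k, by omega⟩ ⟨k + m, hm'⟩
      (by show k < k + m; omega)

def redsOf (r : ℕ) (a : ℕ → ℕ) (i : ℕ) : List ℕ :=
  (List.range (r * a i)).map (Nat.pair i)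

def greensOf (r : ℕ) (a : ℕ → ℕ) (i : ℕ) : List ℕ :=
  (List.range (r * a i)).map (fun j => Nat.pair i (r * a i + j))

def grpL (n : ℕ) (f : ℕ → ℕ) (g : ℕ) : List ℕ :=
  ((Finset.range (3 * n)).filter (fun i => f i = g)).sort (·≤·)

def roundL (r : ℕ) (a : ℕ → ℕ) (n : ℕ) (f : ℕ → ℕ) (g : ℕ) : List ℕ :=
  (grpL n f g).flatMap (redsOf r a) ++ (grpL n f g).flatMap (greensOf r a)

def dispatchL (r : ℕ) (a : ℕ → ℕ) (n : ℕ) (f : ℕ → ℕ) : List ℕ :=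
  (List.range n).flatMap (roundL r a n f)

lemma mem_redsOf {r : ℕ} {a : ℕ → ℕ} {i u : ℕ} :
    u ∈ redsOf r a i ↔ ∃ j, j < r * a i ∧ u = Nat.pair i j := by
  simp [redsOf, eq_comm]

lemma mem_greensOf {r : ℕ} {a : ℕ → ℕ} {i u : ℕ} :
    u ∈ greensOf r a i ↔ ∃ j, r * a i ≤ j ∧ j < 2 * (r * a i) ∧ u = Nat.pair i j := by
  constructor
  · intro h
    simp only [greensOf, List.mem_map, List.mem_range] at h
    obtain ⟨j, hj, rfl⟩ := h
    exact ⟨r * a i + j, by omega, by omega, rfl⟩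
  · rintro ⟨j, h1, h2, rfl⟩
    simp only [greensOf, List.mem_map, List.mem_range]
    exact ⟨j - r * a i, by omega, by rw [Nat.add_sub_cancel' h1]⟩

lemma mem_roundL {r : ℕ} {a : ℕ → ℕ} {n : ℕ} {f : ℕ → ℕ} {g u : ℕ} :
    u ∈ roundL r a n f g ↔
      ∃ i j, i < 3 * n ∧ f i = g ∧ j < 2 * (r * a i) ∧ u = Nat.pair i j := by
  simp only [roundL, List.mem_append, List.mem_flatMap, grpL, Finset.mem_sort,
    Finset.mem_filter, Finset.mem_range]
  constructor
  · rintro (⟨i, ⟨hi, hfi⟩, hu⟩ | ⟨i, ⟨hi, hfi⟩, hu⟩)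
    · obtain ⟨j, hj, rfl⟩ := mem_redsOf.1 hu
      exact ⟨i, j, hi, hfi, by omega, rfl⟩
    · obtain ⟨j, h1, h2, rfl⟩ := mem_greensOf.1 hu
      exact ⟨i, j, hi, hfi, h2, rfl⟩
  · rintro ⟨i, j, hi, hfi, hj, rfl⟩
    rcases Nat.lt_or_ge j (r * a i) with h | h
    · exact Or.inl ⟨i, ⟨hi, hfi⟩, mem_redsOf.2 ⟨j, h, rfl⟩⟩
    · exact Or.inr ⟨i, ⟨hi, hfi⟩, mem_greensOf.2 ⟨j, h, hj, rfl⟩⟩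

lemma mem_dispatchL {r : ℕ} {a : ℕ → ℕ} {n : ℕ} {f : ℕ → ℕ}
    (hf : ∀ i < 3 * n, f i < n) {u : ℕ} :
    u ∈ dispatchL r a n f ↔
      ∃ i j, i < 3 * n ∧ j < 2 * (r * a i) ∧ u = Nat.pair i j := by
  simp only [dispatchL, List.mem_flatMap, List.mem_range]
  constructor
  · rintro ⟨g, hg, hu⟩
    obtain ⟨i, j, hi, hfi, hj, rfl⟩ := mem_roundL.1 hu
    exact ⟨i, j, hi, hj, rfl⟩
  · rintro ⟨i, j, hi, hj, rfl⟩
    exact ⟨f i, hf i hi, mem_roundL.2 ⟨i, j, hi, rfl, hj, rfl⟩⟩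

/-- master pairwise property for the dispatch order -/
lemma pairwise_dispatchL (r : ℕ) (a : ℕ → ℕ) (n : ℕ) (f : ℕ → ℕ) :
    (dispatchL r a n f).Pairwise
      (fun u w => u.unpair.1 ≠ w.unpair.1 ∨ u.unpair.2 < w.unpair.2) := by
  rw [dispatchL, List.pairwise_flatMap]
  constructor
  · intro g hg
    rw [roundL, List.pairwise_append]
    refine ⟨?_, ?_, ?_⟩
    · rw [List.pairwise_flatMap]
      constructor
      · intro i hi
        rw [redsOf, List.pairwise_map]
        refine List.pairwise_lt_range.imp ?_
        intro j j' hjj'; right; simpa using hjj'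
      · refine ((Finset.sortedLT_sort _).pairwise.imp ?_)
        intro i i' hii' u hu w hw
        obtain ⟨j, _, rfl⟩ := mem_redsOf.1 hu
        obtain ⟨j', _, rfl⟩ := mem_redsOf.1 hw
        left; simpa using hii'.ne
    · rw [List.pairwise_flatMap]
      constructor
      · intro i hi
        rw [greensOf, List.pairwise_map]
        refine List.pairwise_lt_range.imp ?_
        intro j j' hjj'; right; simpa using hjj'
      · refine ((Finset.sortedLT_sort _).pairwise.imp ?_)
        intro i i' hii' u hu w hw
        obtain ⟨j, _, _, rfl⟩ := mem_greensOf.1 hu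
        obtain ⟨j', _, _, rfl⟩ := mem_greensOf.1 hw
        left; simpa using hii'.ne
    · intro u hu w hw
      rw [List.mem_flatMap] at hu hw
      obtain ⟨i, hi, hu⟩ := hu
      obtain ⟨i', hi', hw⟩ := hw
      obtain ⟨j, hj, rfl⟩ := mem_redsOf.1 hu
      obtain ⟨j', hj'1, _, rfl⟩ := mem_greensOf.1 hw
      rcases eq_or_ne i i' with rfl | hne
      · right; simp only [Nat.unpair_pair]; omega
      · left; simpa using hne
  · refine (List.pairwise_lt_range (n := n)).imp ?_
    intro g g' hgg' u hu w hw
    obtain ⟨i, j, hi, hfi, hj, rfl⟩ := mem_roundL.1 hu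
    obtain ⟨i', j', hi', hfi', hj', rfl⟩ := mem_roundL.1 hw
    left
    simp only [Nat.unpair_pair]
    rintro rfl
    omega

lemma nodup_dispatchL (r : ℕ) (a : ℕ → ℕ) (n : ℕ) (f : ℕ → ℕ) :
    (dispatchL r a n f).Nodup := by
  refine (pairwise_dispatchL r a n f).imp ?_
  intro u w h
  rcases h with h | h
  · intro he; exact h (by rw [he])
  · intro he; rw [he] at h; omega

lemma edge_false_dispatchL (r : ℕ) (a : ℕ → ℕ) (n : ℕ) (f : ℕ → ℕ) (s : ℕ) (T : ℕ) :
    (dispatchL r a n f).Pairwise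
      (fun u w => (GMconf n T a r s).edge u w = false) := by
  refine (pairwise_dispatchL r a n f).imp ?_
  intro u w h
  show ((u.unpair.1 == w.unpair.1) && (u.unpair.2 == w.unpair.2 + 1)) = false
  rcases h with h | h
  · simp [h]
  · have : u.unpair.2 ≠ w.unpair.2 + 1 := by omega
    simp [this]
lemma flatMap_replicate_const (l : List ℕ) (m : ℕ → ℕ) (c : ℕ) :
    (l.flatMap fun i => List.replicate (m i) c) = List.replicate ((l.map m).sum) c := by
  induction l with
  | nil => rfl
  | cons i l ih => simp [List.flatMap_cons, ih, ← List.replicate_add]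

lemma map_color_redsOf (n T r s : ℕ) (a : ℕ → ℕ) (i : ℕ) :
    (redsOf r a i).map (fun v => ((GMconf n T a r s).label v).1)
      = List.replicate (r * a i) 0 := by
  refine List.eq_replicate_iff.2 ⟨by simp [redsOf], ?_⟩
  intro b hb
  simp only [List.mem_map] at hb
  obtain ⟨u, hu, rfl⟩ := hb
  obtain ⟨j, hj, rfl⟩ := mem_redsOf.1 hu
  simp [GMconf, Nat.unpair_pair, hj]

lemma map_color_greensOf (n T r s : ℕ) (a : ℕ → ℕ) (i : ℕ) :
    (greensOf r a i).map (fun v => ((GMconf n T a r s).label v).1)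
      = List.replicate (r * a i) 1 := by
  refine List.eq_replicate_iff.2 ⟨by simp [greensOf], ?_⟩
  intro b hb
  simp only [List.mem_map] at hb
  obtain ⟨u, hu, rfl⟩ := hb
  obtain ⟨j, hj1, hj2, rfl⟩ := mem_greensOf.1 hu
  simp only [GMconf, Nat.unpair_pair]
  rw [if_neg (by omega)]

lemma sum_grpL (n T : ℕ) (a : ℕ → ℕ) (f : ℕ → ℕ) (g : ℕ)
    (h : ((Finset.range (3 * n)).filter (fun i => f i = g)).sum a = T) (r : ℕ) :
    ((grpL n f g).map fun i => r * a i).sum = r * T := by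
  have hperm : List.Perm (grpL n f g)
      ((Finset.range (3 * n)).filter (fun i => f i = g)).toList :=
    Finset.sort_perm_toList _ _
  rw [List.Perm.sum_eq (hperm.map _), Finset.sum_map_toList, ← Finset.mul_sum, h]

lemma map_color_roundL (n T r s : ℕ) (a : ℕ → ℕ) (f : ℕ → ℕ) (g : ℕ)
    (h : ((Finset.range (3 * n)).filter (fun i => f i = g)).sum a = T) :
    (roundL r a n f g).map (fun v => ((GMconf n T a r s).label v).1)
      = List.replicate (r * T) 0 ++ List.replicate (r * T) 1 := by
  rw [roundL, List.map_append, List.map_flatMap, List.map_flatMap]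
  have h0 : ((grpL n f g).flatMap fun i =>
      (redsOf r a i).map (fun v => ((GMconf n T a r s).label v).1))
      = List.replicate (r * T) 0 := by
    have : ((grpL n f g).flatMap fun i =>
        (redsOf r a i).map (fun v => ((GMconf n T a r s).label v).1))
        = (grpL n f g).flatMap fun i => List.replicate (r * a i) 0 := by
      apply List.flatMap_congr
      intro i _; exact map_color_redsOf n T r s a i
    rw [this, flatMap_replicate_const, sum_grpL n T a f g h r]
  have h1 : ((grpL n f g).flatMap fun i =>
      (greensOf r a i).map (fun v => ((GMconf n T a r s).label v).1))
      = List.replicate (r * T) 1 := by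
    have : ((grpL n f g).flatMap fun i =>
        (greensOf r a i).map (fun v => ((GMconf n T a r s).label v).1))
        = (grpL n f g).flatMap fun i => List.replicate (r * a i) 1 := by
      apply List.flatMap_congr
      intro i _; exact map_color_greensOf n T r s a i
    rw [this, flatMap_replicate_const, sum_grpL n T a f g h r]
  rw [h0, h1]

lemma map_color_dispatchL (n T r s : ℕ) (a : ℕ → ℕ) (f : ℕ → ℕ)
    (h : ∀ g < n, ((Finset.range (3 * n)).filter (fun i => f i = g)).sum a = T) :
    (dispatchL r a n f).map (fun v => ((GMconf n T a r s).label v).1)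
      = (GMconf n T a r s).Q := by
  show _ = (List.replicate n (List.replicate (r*T) 0 ++ List.replicate (r*T) 1)).flatten
  rw [dispatchL, List.map_flatMap]
  have : ((List.range n).flatMap fun g =>
      (roundL r a n f g).map (fun v => ((GMconf n T a r s).label v).1))
      = (List.range n).flatMap fun _ =>
          List.replicate (r*T) 0 ++ List.replicate (r*T) 1 := by
    apply List.flatMap_congr
    intro g hg
    exact map_color_roundL n T r s a f g (h g (List.mem_range.1 hg))
  rw [this, List.flatMap_def, List.map_const']
  simp
lemma partA_solvable (r n T : ℕ) (a : ℕ → ℕ) (hf : HasPartition n T a) :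
    Solvable (GMconf n T a r 1) := by
  obtain ⟨f, hflt, hprop⟩ := hf
  apply solve_of_seq (dispatchL r a n f) (GMconf n T a r 1) rfl (fun v _ => rfl)
  · intro v
    rw [mem_dispatchL hflt]
    simp only [GMconf, Finset.mem_biUnion, Finset.mem_range, Finset.mem_image]
    constructor
    · rintro ⟨i, hi, j, hj, rfl⟩; exact ⟨i, j, hi, hj, rfl⟩
    · rintro ⟨i, j, hi, hj, rfl⟩; exact ⟨i, hi, j, hj, rfl⟩
  · exact nodup_dispatchL r a n f
  · exact (map_color_dispatchL n T r 1 a f (fun g hg => (hprop g hg).2)).symm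
  · apply free_of_pairwise
    · exact edge_false_dispatchL r a n f 1 T
    · intro v _
      show ((v.unpair.1 == v.unpair.1) && (v.unpair.2 == v.unpair.2 + 1)) = false
      simp

lemma no_step_no_spot (C : Config) (hS : C.S = []) (C' : Config) : ¬ Step C C' := by
  rintro (⟨-, v, i, -, hsp, -⟩ | ⟨x, Q', i, k, -, hsp, -⟩) <;>
    rw [hS] at hsp <;> simp at hsp

lemma not_solvable_no_spot (C : Config) (hS : C.S = []) (hV : C.V ≠ ∅) :
    ¬ Solvable C := by
  rintro ⟨C', hreach, hemp⟩
  rcases Relation.ReflTransGen.cases_head hreach with rfl | ⟨c, hc, -⟩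
  · exact hV hemp.1
  · exact no_step_no_spot C hS c hc

lemma partA_lower (r n T : ℕ) (hn : 0 < n) (hT : 0 < T) (hr : 1 ≤ r)
    (a : ℕ → ℕ) (hpos : ∀ i < 3 * n, 0 < a i) :
    ∀ s, Solvable (GMconf n T a r s) → 1 ≤ s := by
  intro s hs
  by_contra h
  have hs0 : s = 0 := by omega
  subst hs0
  refine not_solvable_no_spot _ rfl ?_ hs
  have h0 : (0 : ℕ) < 3 * n := by omega
  have : Nat.pair 0 0 ∈ (GMconf n T a r 0).V := by
    simp only [GMconf, Finset.mem_biUnion, Finset.mem_range, Finset.mem_image]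
    exact ⟨0, h0, 0, by have := hpos 0 h0; positivity, rfl⟩
  intro he; rw [he] at this; simpa using this
lemma count_set_helper {α} [BEq α] : ∀ (l : List α) (i : ℕ) (x : α),
    l[i]? = some x → ∀ (y z : α),
    (l.set i y).count z + (if x == z then 1 else 0) = l.count z + (if y == z then 1 else 0) := by
  intro l
  induction l with
  | nil => intro i x h; simp at h
  | cons a l ih =>
    intro i x h y z
    cases i with
    | zero =>
      simp only [List.getElem?_cons_zero] at h
      obtain rfl : a = x := by injection h
      simp only [List.set, List.count_cons]
      split <;> split <;> omega
    | succ i =>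
      simp only [List.getElem?_cons_succ] at h
      have := ih i x h y z
      simp only [List.set, List.count_cons]
      split <;> omega

lemma count_add_count_le {α} [BEq α] [LawfulBEq α] (x y : α) (hxy : x ≠ y) :
    ∀ (l : List α), l.count x + l.count y ≤ l.length := by
  intro l
  induction l with
  | nil => simp
  | cons a l ih =>
    simp only [List.count_cons, List.length_cons, beq_iff_eq]
    have : ¬ (a = x ∧ a = y) := by rintro ⟨rfl, rfl⟩; exact hxy rfl
    by_cases h1 : a = x <;> by_cases h2 : a = y <;> simp [h1, h2, hxy, hxy.symm] at this ⊢ <;> omega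

lemma mem_V0 {n T : ℕ} {a : ℕ → ℕ} {r s : ℕ} {i j : ℕ} :
    Nat.pair i j ∈ (GMconf n T a r s).V ↔ i < 3 * n ∧ j < 2 * (r * a i) := by
  simp only [GMconf, Finset.mem_biUnion, Finset.mem_range, Finset.mem_image]
  constructor
  · rintro ⟨i', hi', j', hj', he⟩
    obtain ⟨rfl, rfl⟩ : i' = i ∧ j' = j := by
      have := congrArg Nat.unpair he; simpa [Nat.unpair_pair, Prod.ext_iff] using this
    exact ⟨hi', hj'⟩
  · rintro ⟨hi, hj⟩; exact ⟨i, hi, j, hj, rfl⟩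

lemma step_V_mono {C C' : Config} (h : Step C C') : C'.V ⊆ C.V := by
  rcases h with ⟨-, v, i, -, -, rfl⟩ | ⟨x, Q', i, k, -, -, rfl⟩
  · exact Finset.erase_subset _ _
  · exact fun _ h => h

lemma rtg_V_mono {C C' : Config} (h : Relation.ReflTransGen Step C C') : C'.V ⊆ C.V := by
  induction h with
  | refl => exact fun _ h => h
  | tail _ hstep ih => exact fun x hx => ih (step_V_mono hstep hx)

lemma step_Q {C C' : Config} (h : Step C C') :
    C'.Q = C.Q ∨ ∃ x, C.Q = x :: C'.Q := by
  rcases h with ⟨-, v, i, -, -, rfl⟩ | ⟨x, Q', i, k, hq, -, rfl⟩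
  · exact Or.inl rfl
  · exact Or.inr ⟨x, hq⟩

/-- crossing-time extraction -/
lemma crossing : ∀ {C Cf : Config}, Relation.ReflTransGen Step C Cf →
    ∀ t, Cf.Q.length ≤ t → t ≤ C.Q.length →
    ∃ C', Relation.ReflTransGen Step C C' ∧ Relation.ReflTransGen Step C' Cf ∧
      C'.Q.length = t ∧
      (C.Q.length = t ∨ ∃ C'', Relation.ReflTransGen Step C C'' ∧ AutoStep C'' C') := by
  intro C Cf h
  induction h using Relation.ReflTransGen.head_induction_on with
  | refl =>
    intro t h1 h2
    exact ⟨Cf, .refl, .refl, by omega, Or.inl (by omega)⟩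
  | head hstep htail ih =>
    rename_i C c
    intro t h1 h2
    rcases Nat.eq_or_lt_of_le h2 with he | hlt
    · exact ⟨C, .refl, .head hstep htail, he.symm, Or.inl he.symm⟩
    · rcases step_Q hstep with hq | ⟨x, hq⟩
      · have hcl : t ≤ c.Q.length := by rw [hq]; omega
        obtain ⟨C', h1', h2', h3', h4'⟩ := ih t h1 hcl
        refine ⟨C', .head hstep h1', h2', h3', ?_⟩
        rcases h4' with h | ⟨C'', hr, ha⟩
        · rw [hq] at h; omega
        · exact Or.inr ⟨C'', .head hstep hr, ha⟩
      · have hlen : C.Q.length = c.Q.length + 1 := by rw [hq]; rfl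
        rcases Nat.eq_or_lt_of_le (Nat.le_of_lt_succ (by omega : t < c.Q.length + 1))
            with he | hlt'
        · -- t = c.Q.length : c is the crossing config, reached by this auto step
          have ha : AutoStep C c := by
            rcases hstep with ⟨-, hp⟩ | ha
            · obtain ⟨v, i, -, -, rfl⟩ := hp
              simp at hlen
            · exact ha
          exact ⟨c, .head hstep .refl, htail, he.symm, Or.inr ⟨C, .refl, ha⟩⟩
        · obtain ⟨C', h1', h2', h3', h4'⟩ := ih t h1 (by omega)
          refine ⟨C', .head hstep h1', h2', h3', ?_⟩
          rcases h4' with h | ⟨C'', hr, ha⟩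
          · omega
          · exact Or.inr ⟨C'', .head hstep hr, ha⟩
def parked (x : ℕ) (C : Config) : ℕ := C.S.count (some (x, 1))

def redIn (n r : ℕ) (a : ℕ → ℕ) (C : Config) : ℕ :=
  ∑ i ∈ Finset.range (3 * n),
    ((Finset.range (r * a i)).filter (fun j => Nat.pair i j ∈ C.V)).card

def greenIn (n r : ℕ) (a : ℕ → ℕ) (C : Config) : ℕ :=
  ∑ i ∈ Finset.range (3 * n),
    ((Finset.Ico (r * a i) (2 * (r * a i))).filter (fun j => Nat.pair i j ∈ C.V)).card

structure BOInv (n T r s : ℕ) (a : ℕ → ℕ) (C : Config) : Prop where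
  edge_eq : C.edge = (GMconf n T a r s).edge
  label_eq : C.label = (GMconf n T a r s).label
  slen : C.S.length = s
  swf : ∀ sp ∈ C.S, sp = none ∨ sp = some (0, 1) ∨ sp = some (1, 1)
  vsub : C.V ⊆ (GMconf n T a r s).V
  closed : ∀ i j1 j2, j1 ≤ j2 → j2 < 2 * (r * a i) →
    Nat.pair i j1 ∈ C.V → Nat.pair i j2 ∈ C.V
  qlen : C.Q.length ≤ (GMconf n T a r s).Q.length
  qdrop : C.Q = (GMconf n T a r s).Q.drop ((GMconf n T a r s).Q.length - C.Q.length)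
  red_count : redIn n r a C +
    ((GMconf n T a r s).Q.take ((GMconf n T a r s).Q.length - C.Q.length)).count 0 +
    parked 0 C = r * (n * T)
  green_count : greenIn n r a C +
    ((GMconf n T a r s).Q.take ((GMconf n T a r s).Q.length - C.Q.length)).count 1 +
    parked 1 C = r * (n * T)

lemma inv_init (n T r s : ℕ) (a : ℕ → ℕ)
    (hsum : ∑ i ∈ Finset.range (3 * n), a i = n * T) :
    BOInv n T r s a (GMconf n T a r s) := by
  constructor
  · rfl
  · rfl
  · simp [GMconf]
  · intro sp hsp
    left
    simpa [GMconf] using List.eq_of_mem_replicate hsp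
  · exact fun v h => h
  · intro i j1 j2 h12 h2 h1
    have := mem_V0.1 h1
    exact mem_V0.2 ⟨this.1, h2⟩
  · exact le_refl _
  · simp
  · simp only [Nat.sub_self, List.take_zero, List.count_nil, Nat.add_zero]
    have hp : parked 0 (GMconf n T a r s) = 0 := by
      simp [parked, GMconf, List.count_replicate]
    rw [hp, Nat.add_zero, redIn, ← hsum, Finset.mul_sum]
    apply Finset.sum_congr rfl
    intro i hi
    rw [Finset.mem_range] at hi
    have : (Finset.range (r * a i)).filter
        (fun j => Nat.pair i j ∈ (GMconf n T a r s).V) = Finset.range (r * a i) := by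
      apply Finset.filter_true_of_mem
      intro j hj
      rw [Finset.mem_range] at hj
      exact mem_V0.2 ⟨hi, by omega⟩
    rw [this, Finset.card_range]
  · simp only [Nat.sub_self, List.take_zero, List.count_nil, Nat.add_zero]
    have hp : parked 1 (GMconf n T a r s) = 0 := by
      simp [parked, GMconf, List.count_replicate]
    rw [hp, Nat.add_zero, greenIn, ← hsum, Finset.mul_sum]
    apply Finset.sum_congr rfl
    intro i hi
    rw [Finset.mem_range] at hi
    have : (Finset.Ico (r * a i) (2 * (r * a i))).filter
        (fun j => Nat.pair i j ∈ (GMconf n T a r s).V) = Finset.Ico (r * a i) (2 * (r * a i)) := by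
      apply Finset.filter_true_of_mem
      intro j hj
      rw [Finset.mem_Ico] at hj
      exact mem_V0.2 ⟨hi, by omega⟩
    rw [this, Nat.card_Ico]
    omega
lemma pair_fst_eq {i j i' j' : ℕ} (h : Nat.pair i j = Nat.pair i' j') : i = i' := by
  have := congrArg (fun u => u.unpair.1) h; simpa using this

lemma pair_snd_eq {i j i' j' : ℕ} (h : Nat.pair i j = Nat.pair i' j') : j = j' := by
  have := congrArg (fun u => u.unpair.2) h; simpa using this

lemma inv_step (n T r s : ℕ) (a : ℕ → ℕ) {C C' : Config}
    (hstep : Step C C') (hinv : BOInv n T r s a C) : BOInv n T r s a C' := by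
  rcases hstep with ⟨hna, v, i, hfree, hsp, rfl⟩ | ⟨x, Q', i, k, hq, hsp, rfl⟩
  · -- PlayerStep
    obtain ⟨hvV, hvfree⟩ := hfree
    have hv0 := hinv.vsub hvV
    simp only [GMconf, Finset.mem_biUnion, Finset.mem_range, Finset.mem_image] at hv0
    obtain ⟨iv, hiv, jv, hjv, rfl⟩ := hv0
    have hlabv : C.label (Nat.pair iv jv) = (if jv < r * a iv then 0 else 1, 1) := by
      rw [hinv.label_eq]; simp [GMconf, Nat.unpair_pair]
    set D : Config := { C with V := C.V.erase (Nat.pair iv jv), S := C.S.set i (some (C.label (Nat.pair iv jv))) } with hD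
    -- key counting facts
    have hfilterR : ∀ i', i' ≠ iv ∨ ¬ jv < r * a iv →
        (Finset.range (r * a i')).filter (fun j => Nat.pair i' j ∈ D.V) =
        (Finset.range (r * a i')).filter (fun j => Nat.pair i' j ∈ C.V) := by
      intro i' hcase
      apply Finset.filter_congr
      intro j hj
      rw [Finset.mem_range] at hj
      have hDv : D.V = C.V.erase (Nat.pair iv jv) := rfl
      rw [hDv, Finset.mem_erase, and_iff_right_iff_imp]
      intro _ he
      rcases hcase with hne | hge
      · exact hne (pair_fst_eq he)
      · have hj' := pair_snd_eq he
        have hi' := pair_fst_eq he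
        subst hi'; omega
    have hfilterG : ∀ i', i' ≠ iv ∨ jv < r * a iv →
        (Finset.Ico (r * a i') (2 * (r * a i'))).filter (fun j => Nat.pair i' j ∈ D.V) =
        (Finset.Ico (r * a i') (2 * (r * a i'))).filter (fun j => Nat.pair i' j ∈ C.V) := by
      intro i' hcase
      apply Finset.filter_congr
      intro j hj
      rw [Finset.mem_Ico] at hj
      have hDv : D.V = C.V.erase (Nat.pair iv jv) := rfl
      rw [hDv, Finset.mem_erase, and_iff_right_iff_imp]
      intro _ he
      rcases hcase with hne | hlt
      · exact hne (pair_fst_eq he)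
      · have hj' := pair_snd_eq he
        have hi' := pair_fst_eq he
        subst hi'; omega
    constructor
    case edge_eq => exact hinv.edge_eq
    case label_eq => exact hinv.label_eq
    case slen => simpa [hD] using hinv.slen
    case swf =>
      intro sp hsp'
      rcases List.mem_or_eq_of_mem_set hsp' with h | rfl
      · exact hinv.swf sp h
      · rw [hlabv]
        by_cases h : jv < r * a iv <;> simp [h]
    case vsub =>
      exact Finset.Subset.trans (Finset.erase_subset _ _) hinv.vsub
    case closed =>
      intro i' j1 j2 h12 h2 h1m
      have h1C : Nat.pair i' j1 ∈ C.V := Finset.mem_of_mem_erase h1m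
      have h2C : Nat.pair i' j2 ∈ C.V := hinv.closed i' j1 j2 h12 h2 h1C
      refine Finset.mem_erase.2 ⟨?_, h2C⟩
      intro he
      obtain rfl : i' = iv := pair_fst_eq he
      obtain rfl : j2 = jv := pair_snd_eq he
      rcases Nat.eq_or_lt_of_le h12 with rfl | hlt
      · exact (Finset.mem_erase.1 h1m).1 rfl
      · have h3 : Nat.pair i' (j2 - 1) ∈ C.V :=
          hinv.closed i' j1 (j2 - 1) (by omega) (by omega) h1C
        have h4 := hvfree _ h3
        rw [hinv.edge_eq] at h4
        apply h4
        show (GMconf n T a r s).edge (Nat.pair i' j2) (Nat.pair i' (j2 - 1)) = true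
        show ((Nat.pair i' j2).unpair.1 == (Nat.pair i' (j2-1)).unpair.1
          && ((Nat.pair i' j2).unpair.2 == (Nat.pair i' (j2-1)).unpair.2 + 1)) = true
        simp only [Nat.unpair_pair, Bool.and_eq_true, beq_iff_eq]
        exact ⟨trivial, by omega⟩
    case qlen => exact hinv.qlen
    case qdrop => exact hinv.qdrop
    case red_count =>
      have hrc := hinv.red_count
      show redIn n r a D + ((GMconf n T a r s).Q.take ((GMconf n T a r s).Q.length - D.Q.length)).count 0 + parked 0 D = r * (n*T)
      have hDQ : D.Q = C.Q := rfl
      rw [hDQ]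
      by_cases hred : jv < r * a iv
      · -- red bus parked: redIn drops by 1, parked 0 grows by 1
        have hri : redIn n r a D + 1 = redIn n r a C := by
          unfold redIn
          rw [← Finset.sum_erase_add _ _ (Finset.mem_range.2 hiv),
              ← Finset.sum_erase_add _ _ (Finset.mem_range.2 hiv)]
          rw [Finset.sum_congr rfl (fun i' hi' => by
            rw [hfilterR i' (Or.inl (Finset.mem_erase.1 hi').1)])]
          have hfe : (Finset.range (r * a iv)).filter (fun j => Nat.pair iv j ∈ D.V) =
              ((Finset.range (r * a iv)).filter (fun j => Nat.pair iv j ∈ C.V)).erase jv := by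
            ext j
            show j ∈ (Finset.range (r * a iv)).filter
              (fun j => Nat.pair iv j ∈ C.V.erase (Nat.pair iv jv)) ↔ _
            simp only [Finset.mem_filter, Finset.mem_erase, Finset.mem_range]
            constructor
            · rintro ⟨hj, hne, hmem⟩
              exact ⟨fun he => hne (by rw [he]), hj, hmem⟩
            · rintro ⟨hne, hj, hmem⟩
              exact ⟨hj, fun he => hne (pair_snd_eq he), hmem⟩
          rw [hfe]
          have hjvmem : jv ∈ (Finset.range (r * a iv)).filter
              (fun j => Nat.pair iv j ∈ C.V) :=
            Finset.mem_filter.2 ⟨Finset.mem_range.2 hred, hvV⟩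
          rw [Finset.card_erase_of_mem hjvmem]
          have : 1 ≤ ((Finset.range (r * a iv)).filter (fun j => Nat.pair iv j ∈ C.V)).card :=
            Finset.card_pos.2 ⟨jv, hjvmem⟩
          omega
        have hlabe : some (C.label (Nat.pair iv jv)) = some ((0:ℕ), (1:ℕ)) := by
          rw [hlabv, if_pos hred]
        have hp0 : parked 0 D = parked 0 C + 1 := by
          show (C.S.set i (some (C.label (Nat.pair iv jv)))).count (some (0,1))
            = C.S.count (some (0,1)) + 1
          rw [hlabe]
          have h2 := count_set_helper C.S i none hsp (some ((0:ℕ),(1:ℕ))) (some ((0:ℕ),(1:ℕ)))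
          simpa using h2
        omega
      · -- green bus parked: redIn, parked 0 unchanged
        have hri : redIn n r a D = redIn n r a C := by
          unfold redIn
          exact Finset.sum_congr rfl (fun i' _ => by rw [hfilterR i' (Or.inr hred)])
        have hlabe : some (C.label (Nat.pair iv jv)) = some ((1:ℕ), (1:ℕ)) := by
          rw [hlabv, if_neg hred]
        have hp0 : parked 0 D = parked 0 C := by
          show (C.S.set i (some (C.label (Nat.pair iv jv)))).count (some (0,1))
            = C.S.count (some (0,1))
          rw [hlabe]
          have h2 := count_set_helper C.S i none hsp (some ((1:ℕ),(1:ℕ))) (some ((0:ℕ),(1:ℕ)))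
          simpa using h2
        omega
    case green_count =>
      have hgc := hinv.green_count
      show greenIn n r a D + ((GMconf n T a r s).Q.take ((GMconf n T a r s).Q.length - D.Q.length)).count 1 + parked 1 D = r * (n*T)
      have hDQ : D.Q = C.Q := rfl
      rw [hDQ]
      by_cases hred : jv < r * a iv
      · have hgi : greenIn n r a D = greenIn n r a C := by
          unfold greenIn
          exact Finset.sum_congr rfl (fun i' _ => by rw [hfilterG i' (Or.inr hred)])
        have hlabe : some (C.label (Nat.pair iv jv)) = some ((0:ℕ), (1:ℕ)) := by
          rw [hlabv, if_pos hred]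
        have hp1 : parked 1 D = parked 1 C := by
          show (C.S.set i (some (C.label (Nat.pair iv jv)))).count (some (1,1))
            = C.S.count (some (1,1))
          rw [hlabe]
          have h2 := count_set_helper C.S i none hsp (some ((0:ℕ),(1:ℕ))) (some ((1:ℕ),(1:ℕ)))
          simpa using h2
        omega
      · have hgi : greenIn n r a D + 1 = greenIn n r a C := by
          unfold greenIn
          rw [← Finset.sum_erase_add _ _ (Finset.mem_range.2 hiv),
              ← Finset.sum_erase_add _ _ (Finset.mem_range.2 hiv)]
          rw [Finset.sum_congr rfl (fun i' hi' => by
            rw [hfilterG i' (Or.inl (Finset.mem_erase.1 hi').1)])]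
          have hfe : (Finset.Ico (r * a iv) (2 * (r * a iv))).filter
              (fun j => Nat.pair iv j ∈ D.V) =
              ((Finset.Ico (r * a iv) (2 * (r * a iv))).filter
                (fun j => Nat.pair iv j ∈ C.V)).erase jv := by
            ext j
            show j ∈ (Finset.Ico (r * a iv) (2 * (r * a iv))).filter
              (fun j => Nat.pair iv j ∈ C.V.erase (Nat.pair iv jv)) ↔ _
            simp only [Finset.mem_filter, Finset.mem_erase, Finset.mem_Ico]
            constructor
            · rintro ⟨hj, hne, hmem⟩
              exact ⟨fun he => hne (by rw [he]), hj, hmem⟩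
            · rintro ⟨hne, hj, hmem⟩
              exact ⟨hj, fun he => hne (pair_snd_eq he), hmem⟩
          rw [hfe]
          have hjvmem : jv ∈ (Finset.Ico (r * a iv) (2 * (r * a iv))).filter
              (fun j => Nat.pair iv j ∈ C.V) :=
            Finset.mem_filter.2 ⟨Finset.mem_Ico.2 ⟨by omega, hjv⟩, hvV⟩
          rw [Finset.card_erase_of_mem hjvmem]
          have : 1 ≤ ((Finset.Ico (r * a iv) (2 * (r * a iv))).filter
              (fun j => Nat.pair iv j ∈ C.V)).card :=
            Finset.card_pos.2 ⟨jv, hjvmem⟩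
          omega
        have hlabe : some (C.label (Nat.pair iv jv)) = some ((1:ℕ), (1:ℕ)) := by
          rw [hlabv, if_neg hred]
        have hp1 : parked 1 D = parked 1 C + 1 := by
          show (C.S.set i (some (C.label (Nat.pair iv jv)))).count (some (1,1))
            = C.S.count (some (1,1)) + 1
          rw [hlabe]
          have h2 := count_set_helper C.S i none hsp (some ((1:ℕ),(1:ℕ))) (some ((1:ℕ),(1:ℕ)))
          simpa using h2
        omega
  · -- AutoStep
    have hmem : some (x, k) ∈ C.S := List.mem_of_getElem? hsp
    have hxk : (x = 0 ∨ x = 1) ∧ k = 1 := by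
      rcases hinv.swf _ hmem with h | h | h
      · exact absurd h (by simp)
      · injection h with h'; injection h' with h1 h2; exact ⟨Or.inl h1, h2⟩
      · injection h with h'; injection h' with h1 h2; exact ⟨Or.inr h1, h2⟩
    obtain ⟨hx01, rfl⟩ := hxk
    have hifn : (if (1:ℕ) ≤ 1 then (none : Option (ℕ × ℕ)) else some (x, 1-1)) = none := by
      simp
    set D : Config := { C with Q := Q', S := C.S.set i none } with hD
    have hgoal : BOInv n T r s a D → BOInv n T r s a { C with Q := Q', S := C.S.set i (if (1:ℕ) ≤ 1 then none else some (x, 1-1)) } := by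
      rw [hifn]; exact id
    apply hgoal
    have hlen1 : 1 ≤ C.Q.length := by rw [hq]; simp
    set Q₀ := (GMconf n T a r s).Q with hQ0
    set t := Q₀.length - C.Q.length with ht
    have htQ : Q₀.drop t = x :: Q' := by rw [← hq]; exact hinv.qdrop.symm
    have htlt : t < Q₀.length := by
      rw [ht, hQ0]; have := hinv.qlen; omega
    have hdrop' : Q₀.drop (t + 1) = Q' := by
      have h0 : Q₀.drop (t+1) = (Q₀.drop t).drop 1 := by
        rw [List.drop_drop]
      rw [h0, htQ]; rfl
    have htake' : Q₀.take (t + 1) = Q₀.take t ++ [x] := by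
      rw [List.take_add, htQ]; rfl
    have ht' : Q₀.length - Q'.length = t + 1 := by
      rw [ht, hQ0]
      have h1 : C.Q.length = Q'.length + 1 := by rw [hq]; rfl
      have := hinv.qlen
      omega
    constructor
    case edge_eq => exact hinv.edge_eq
    case label_eq => exact hinv.label_eq
    case slen => simpa [hD] using hinv.slen
    case swf =>
      intro sp hsp'
      rcases List.mem_or_eq_of_mem_set hsp' with h | rfl
      · exact hinv.swf sp h
      · exact Or.inl rfl
    case vsub => exact hinv.vsub
    case closed => exact hinv.closed
    case qlen =>
      show Q'.length ≤ Q₀.length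
      rw [hQ0]
      have h1 : C.Q.length = Q'.length + 1 := by rw [hq]; rfl
      have := hinv.qlen
      omega
    case qdrop =>
      show Q' = Q₀.drop (Q₀.length - Q'.length)
      rw [ht', hdrop']
    case red_count =>
      show redIn n r a D + (Q₀.take (Q₀.length - Q'.length)).count 0 + parked 0 D = _
      rw [ht', htake', List.count_append]
      have hri : redIn n r a D = redIn n r a C := by
        unfold redIn; rfl
      have hrc : redIn n r a C + (Q₀.take t).count 0 + parked 0 C = r * (n * T) :=
        hinv.red_count
      rcases hx01 with rfl | rfl
      · have hc : ([(0:ℕ)]).count 0 = 1 := by simp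
        have hp : parked 0 D + 1 = parked 0 C := by
          have h2 := count_set_helper C.S i (some ((0:ℕ),(1:ℕ))) hsp none (some ((0:ℕ),(1:ℕ)))
          simpa [parked] using h2
        rw [hri, hc]
        omega
      · have hc : ([(1:ℕ)]).count 0 = 0 := by simp
        have hp : parked 0 D = parked 0 C := by
          have h2 := count_set_helper C.S i (some ((1:ℕ),(1:ℕ))) hsp none (some ((0:ℕ),(1:ℕ)))
          simpa [parked] using h2
        rw [hri, hc]
        omega
    case green_count =>
      show greenIn n r a D + (Q₀.take (Q₀.length - Q'.length)).count 1 + parked 1 D = _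
      rw [ht', htake', List.count_append]
      have hgi : greenIn n r a D = greenIn n r a C := by
        unfold greenIn; rfl
      have hgc : greenIn n r a C + (Q₀.take t).count 1 + parked 1 C = r * (n * T) :=
        hinv.green_count
      rcases hx01 with rfl | rfl
      · have hc : ([(0:ℕ)]).count 1 = 0 := by simp
        have hp : parked 1 D = parked 1 C := by
          have h2 := count_set_helper C.S i (some ((0:ℕ),(1:ℕ))) hsp none (some ((1:ℕ),(1:ℕ)))
          simpa [parked] using h2
        rw [hgi, hc]
        omega
      · have hc : ([(1:ℕ)]).count 1 = 1 := by simp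
        have hp : parked 1 D + 1 = parked 1 C := by
          have h2 := count_set_helper C.S i (some ((1:ℕ),(1:ℕ))) hsp none (some ((1:ℕ),(1:ℕ)))
          simpa [parked] using h2
        rw [hgi, hc]
        omega

lemma inv_reach (n T r s : ℕ) (a : ℕ → ℕ) {C : Config}
    (hsum : ∑ i ∈ Finset.range (3 * n), a i = n * T)
    (h : Relation.ReflTransGen Step (GMconf n T a r s) C) : BOInv n T r s a C := by
  induction h with
  | refl => exact inv_init n T r s a hsum
  | tail _ hstep ih => exact inv_step n T r s a hstep ih
lemma flatten_replicate_length {α} (L : List α) (m : ℕ) :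
    (List.replicate m L).flatten.length = m * L.length := by
  induction m with
  | zero => simp
  | succ m ih => simp [List.replicate_succ, ih]; ring

lemma take_flatten_replicate {α} (L : List α) (g m : ℕ) (h : g ≤ m) :
    ((List.replicate m L).flatten).take (g * L.length) = (List.replicate g L).flatten := by
  conv_lhs => rw [show m = g + (m - g) by omega]
  rw [List.replicate_add, List.flatten_append,
    List.take_left' (flatten_replicate_length L g)]

lemma count_flatten_replicate (L : List ℕ) (m x : ℕ) :
    ((List.replicate m L).flatten).count x = m * L.count x := by
  induction m with
  | zero => simp
  | succ m ih => simp [List.replicate_succ, ih]; ring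

lemma Q0_len (n T : ℕ) (a : ℕ → ℕ) (r s : ℕ) :
    (GMconf n T a r s).Q.length = n * (2 * (r * T)) := by
  show (List.replicate n (List.replicate (r*T) 0 ++ List.replicate (r*T) 1)).flatten.length = _
  rw [flatten_replicate_length]
  simp [two_mul]

lemma Q0_take_count (n T : ℕ) (a : ℕ → ℕ) (r s g : ℕ) (hg : g ≤ n) :
    ((GMconf n T a r s).Q.take (2*g*(r*T))).count 0 = g * (r * T) ∧
    ((GMconf n T a r s).Q.take (2*g*(r*T))).count 1 = g * (r * T) := by
  have hlen : (List.replicate (r*T) (0:ℕ) ++ List.replicate (r*T) 1).length = 2*(r*T) := by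
    simp; ring
  have htake : (GMconf n T a r s).Q.take (2*g*(r*T)) =
      (List.replicate g (List.replicate (r*T) (0:ℕ) ++ List.replicate (r*T) 1)).flatten := by
    show (List.replicate n (List.replicate (r*T) (0:ℕ) ++ List.replicate (r*T) 1)).flatten.take
      (2*g*(r*T)) = _
    have h2 : 2*g*(r*T) = g * (List.replicate (r*T) (0:ℕ) ++ List.replicate (r*T) 1).length := by
      rw [hlen]; ring
    rw [h2, take_flatten_replicate _ _ _ hg]
  rw [htake, count_flatten_replicate, count_flatten_replicate]
  constructor
  · rw [List.count_append, List.count_replicate, List.count_replicate]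
    simp
  · rw [List.count_append, List.count_replicate, List.count_replicate]
    simp

/-- after the queue is exhausted, no useful progress: V must already be empty -/
lemma V_card_ineq : ∀ {C Cf : Config}, Relation.ReflTransGen Step C Cf → C.Q = [] →
    C.V.card + Cf.S.count none ≤ Cf.V.card + C.S.count none := by
  intro C Cf h
  induction h using Relation.ReflTransGen.head_induction_on with
  | refl => intro _; omega
  | head hstep htail ih =>
    rename_i C c
    intro hQ
    rcases hstep with ⟨-, v, i, hfree, hsp, rfl⟩ | ⟨x, Q', i, k, hq, -, -⟩
    · have hcard : (C.V.erase v).card + 1 = C.V.card :=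
        Finset.card_erase_add_one hfree.1
      have hcnt := count_set_helper C.S i none hsp (some (C.label v)) none
      have h1 : (if (none : Option (ℕ×ℕ)) == none then 1 else 0) = 1 := by simp
      have h2 : (if ((some (C.label v)) : Option (ℕ×ℕ)) == none then 1 else 0) = 0 := by simp
      rw [h1, h2] at hcnt
      have hih : (C.V.erase v).card + Cf.S.count none ≤
          Cf.V.card + (C.S.set i (some (C.label v))).count none := ih hQ
      omega
    · rw [hQ] at hq; exact absurd hq (by simp)

lemma V_empty_of_Q_empty {C Cf : Config} (h : Relation.ReflTransGen Step C Cf)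
    (hQ : C.Q = []) (hemp : Cf.IsEmpty) (hlen : Cf.S.length = C.S.length) :
    C.V = ∅ := by
  have hineq := V_card_ineq h hQ
  have hCf : Cf.S.count none = Cf.S.length := by
    rw [List.count_eq_length]
    intro b hb
    exact (hemp.2.2 b hb).symm
  have hle : C.S.count none ≤ C.S.length := List.count_le_length
  have hV0 : Cf.V.card = 0 := by rw [hemp.1]; rfl
  rw [hCf, hV0, hlen] at hineq
  have : C.V.card = 0 := by omega
  exact Finset.card_eq_zero.1 this
def Rset (n r : ℕ) (a : ℕ → ℕ) (C : Config) : Finset ℕ :=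
  (Finset.range (3*n)).filter
    (fun i => ((Finset.range (r*a i)).filter (fun j => Nat.pair i j ∈ C.V)).card = 0)

lemma Rset_mono {n r : ℕ} {a : ℕ → ℕ} {C C' : Config} (hV : C'.V ⊆ C.V) :
    Rset n r a C ⊆ Rset n r a C' := by
  intro i hi
  rw [Rset, Finset.mem_filter] at hi ⊢
  refine ⟨hi.1, ?_⟩
  have hsub : (Finset.range (r*a i)).filter (fun j => Nat.pair i j ∈ C'.V) ⊆
      (Finset.range (r*a i)).filter (fun j => Nat.pair i j ∈ C.V) :=
    Finset.monotone_filter_right _ (fun j _ hj => hV hj)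
  have := Finset.card_le_card hsub
  omega

lemma snapshot_sum (n T r s : ℕ) (a : ℕ → ℕ) (hT : 0 < T) (hr : 1 ≤ r)
    (hsum : ∑ i ∈ Finset.range (3 * n), a i = n * T) {C : Config}
    (hinv : BOInv n T r s a C) (g : ℕ) (hg : g ≤ n)
    (hlen : C.Q.length = (GMconf n T a r s).Q.length - 2*g*(r*T))
    (hparked : parked 0 C + 1 ≤ s) (hsr : s ≤ r) :
    ∑ i ∈ Rset n r a C, a i = g * T := by
  have hQlen := Q0_len n T a r s
  have h2g : 2*g*(r*T) ≤ (GMconf n T a r s).Q.length := by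
    rw [hQlen]
    have : 2*g ≤ 2*n := by omega
    calc 2*g*(r*T) ≤ 2*n*(r*T) := Nat.mul_le_mul_right _ this
    _ = n * (2*(r*T)) := by ring
  have ht : (GMconf n T a r s).Q.length - C.Q.length = 2*g*(r*T) := by omega
  have hrc := hinv.red_count
  have hgc := hinv.green_count
  rw [ht, (Q0_take_count n T a r s g hg).1] at hrc
  rw [ht, (Q0_take_count n T a r s g hg).2] at hgc
  -- abbreviations
  set p : ℕ → Prop := fun i =>
    ((Finset.range (r*a i)).filter (fun j => Nat.pair i j ∈ C.V)).card = 0 with hp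
  have hRdef : Rset n r a C = (Finset.range (3*n)).filter p := rfl
  set cnt : ℕ → ℕ := fun i =>
    ((Finset.range (r*a i)).filter (fun j => Nat.pair i j ∈ C.V)).card with hcnt
  set gcnt : ℕ → ℕ := fun i =>
    ((Finset.Ico (r*a i) (2*(r*a i))).filter (fun j => Nat.pair i j ∈ C.V)).card with hgcnt
  have hsplit : ∀ f : ℕ → ℕ, ∑ i ∈ (Finset.range (3*n)).filter p, f i
      + ∑ i ∈ (Finset.range (3*n)).filter (fun i => ¬ p i), f i
      = ∑ i ∈ Finset.range (3*n), f i := fun f =>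
    Finset.sum_filter_add_sum_filter_not _ _ _
  have hra : ∑ i ∈ Finset.range (3*n), r * a i = r * (n*T) := by
    rw [← Finset.mul_sum, hsum]
  -- redIn = sum over ¬p of cnt
  have hredIn : redIn n r a C = ∑ i ∈ (Finset.range (3*n)).filter (fun i => ¬ p i), cnt i := by
    rw [redIn, ← hsplit cnt]
    have : ∑ i ∈ (Finset.range (3*n)).filter p, cnt i = 0 := by
      apply Finset.sum_eq_zero
      intro i hi
      exact (Finset.mem_filter.1 hi).2
    omega
  have hcnt_le : ∀ i, cnt i ≤ r * a i := by
    intro i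
    calc cnt i ≤ (Finset.range (r*a i)).card := Finset.card_filter_le _ _
    _ = r * a i := Finset.card_range _
  -- greenIn decomposition
  have hgcnt_full : ∀ i, ¬ p i → gcnt i = r * a i := by
    intro i hnp
    have hne : ((Finset.range (r*a i)).filter (fun j => Nat.pair i j ∈ C.V)).Nonempty := by
      rw [← Finset.card_pos]
      omega
    obtain ⟨j, hj⟩ := hne
    rw [Finset.mem_filter, Finset.mem_range] at hj
    have hfull : (Finset.Ico (r*a i) (2*(r*a i))).filter (fun j => Nat.pair i j ∈ C.V)
        = Finset.Ico (r*a i) (2*(r*a i)) := by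
      apply Finset.filter_true_of_mem
      intro j' hj'
      rw [Finset.mem_Ico] at hj'
      exact hinv.closed i j j' (by omega) (by omega) hj.2
    show gcnt i = r * a i
    rw [hgcnt]
    simp only
    rw [hfull, Nat.card_Ico]
    omega
  have hgreenIn : greenIn n r a C =
      ∑ i ∈ (Finset.range (3*n)).filter p, gcnt i
      + ∑ i ∈ (Finset.range (3*n)).filter (fun i => ¬ p i), (r * a i) := by
    rw [greenIn, ← hsplit gcnt]
    congr 1
    apply Finset.sum_congr rfl
    intro i hi
    exact hgcnt_full i (Finset.mem_filter.1 hi).2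
  -- main bounds
  have hsum_ra := hsplit (fun i => r * a i)
  rw [hra] at hsum_ra
  have hApart : ∑ i ∈ (Finset.range (3*n)).filter p, r * a i = r * ∑ i ∈ Rset n r a C, a i := by
    rw [hRdef, Finset.mul_sum]
  -- upper bound
  have hub : ∑ i ∈ (Finset.range (3*n)).filter p, r * a i ≤ g*(r*T) + parked 0 C := by
    have h1 : ∑ i ∈ (Finset.range (3*n)).filter (fun i => ¬ p i), cnt i
        ≤ ∑ i ∈ (Finset.range (3*n)).filter (fun i => ¬ p i), r * a i :=
      Finset.sum_le_sum (fun i _ => hcnt_le i)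
    omega
  -- lower bound
  have hlb : g*(r*T) ≤ ∑ i ∈ (Finset.range (3*n)).filter p, r * a i := by
    have h2 : greenIn n r a C + g*(r*T) + parked 1 C = r * (n*T) := hgc
    omega
  rw [hApart] at hub hlb
  have hX1 : r * (g * T) ≤ r * ∑ i ∈ Rset n r a C, a i := by
    calc r * (g*T) = g * (r*T) := by ring
    _ ≤ _ := hlb
  have hX2 : r * ∑ i ∈ Rset n r a C, a i < r * (g * T + 1) := by
    calc r * ∑ i ∈ Rset n r a C, a i ≤ g*(r*T) + parked 0 C := hub
    _ ≤ g*(r*T) + r - 1 := by omega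
    _ < r * (g*T+1) := by
      have : g*(r*T) = r * (g*T) := by ring
      rw [this]
      have hr1 : 1 ≤ r := hr
      calc r * (g*T) + r - 1 < r * (g*T) + r := by omega
      _ = r * (g*T+1) := by ring
  have h1 := Nat.le_of_mul_le_mul_left hX1 (by omega : 0 < r)
  have h2 := Nat.lt_of_mul_lt_mul_left hX2
  omega

lemma parked_bound {n T r s : ℕ} {a : ℕ → ℕ} {C'' D : Config}
    (hinv : BOInv n T r s a C'') (hauto : AutoStep C'' D) :
    parked 0 D + 1 ≤ s := by
  obtain ⟨x, Q', i, k, hq, hsp, rfl⟩ := hauto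
  have hmem : some (x, k) ∈ C''.S := List.mem_of_getElem? hsp
  have hk : k = 1 := by
    rcases hinv.swf _ hmem with h | h | h
    · exact absurd h (by simp)
    · simp only [Option.some.injEq, Prod.mk.injEq] at h; exact h.2
    · simp only [Option.some.injEq, Prod.mk.injEq] at h; exact h.2
  subst hk
  have hifn : (if (1:ℕ) ≤ 1 then (none : Option (ℕ × ℕ)) else some (x, 1-1)) = none := by
    simp
  rw [hifn]
  show (C''.S.set i none).count (some (0,1)) + 1 ≤ s
  have hilt : i < C''.S.length := by
    by_contra h
    rw [List.getElem?_eq_none (by omega)] at hsp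
    exact absurd hsp (by simp)
  have hnone_mem : (none : Option (ℕ × ℕ)) ∈ C''.S.set i none := by
    have hg : (C''.S.set i none)[i]? = some none := by
      rw [List.getElem?_set_self hilt]
    exact List.mem_of_getElem? hg
  have hcount1 : 1 ≤ (C''.S.set i none).count none := List.count_pos_iff.2 hnone_mem
  have hle : (C''.S.set i none).count (some (0,1)) + (C''.S.set i none).count none
      ≤ (C''.S.set i none).length := count_add_count_le _ _ (by simp) _
  have hlen : (C''.S.set i none).length = s := by
    simpa using hinv.slen
  omega
lemma partition_of_chain (n T : ℕ) (a : ℕ → ℕ) (hn : 0 < n) (hT : 0 < T)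
    (hbound : ∀ i < 3 * n, T < 4 * a i ∧ 2 * a i < T)
    (R : ℕ → Finset ℕ) (hR0 : R 0 = ∅) (hRn : R n = Finset.range (3 * n))
    (hmono : ∀ g, g < n → R g ⊆ R (g + 1))
    (hsumR : ∀ g ≤ n, (R g).sum a = g * T) :
    HasPartition n T a := by
  have hle : ∀ d g, g + d ≤ n → R g ⊆ R (g + d) := by
    intro d
    induction d with
    | zero => intro g _; exact fun x h => h
    | succ d ih =>
      intro g hgd
      have h1 : R g ⊆ R (g + d) := ih g (by omega)
      have h2 : R (g + d) ⊆ R (g + d + 1) := hmono (g + d) (by omega)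
      exact fun x hx => h2 (h1 hx)
  have hle' : ∀ g h, g ≤ h → h ≤ n → R g ⊆ R h := by
    intro g h hgh hhn
    have := hle (h - g) g (by omega)
    rwa [show g + (h - g) = h by omega] at this
  have hex : ∀ i < 3 * n, ∃ g, g < n ∧ i ∈ R (g + 1) := by
    intro i hi
    refine ⟨n - 1, by omega, ?_⟩
    rw [show n - 1 + 1 = n by omega, hRn]
    exact Finset.mem_range.2 hi
  classical
  set f : ℕ → ℕ := fun i =>
    if h : ∃ g, g < n ∧ i ∈ R (g + 1) then Nat.find h else 0 with hf
  have hf1 : ∀ i < 3 * n, f i < n := by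
    intro i hi
    rw [hf]
    simp only
    rw [dif_pos (hex i hi)]
    exact (Nat.find_spec (hex i hi)).1
  have hfilter : ∀ g < n, (Finset.range (3 * n)).filter (fun i => f i = g)
      = R (g + 1) \ R g := by
    intro g hg
    ext i
    rw [Finset.mem_filter, Finset.mem_sdiff, Finset.mem_range]
    constructor
    · rintro ⟨hi, hfi⟩
      have hd := hex i hi
      rw [hf] at hfi
      simp only at hfi
      rw [dif_pos hd] at hfi
      have hspec := Nat.find_spec hd
      rw [hfi] at hspec
      refine ⟨hspec.2, ?_⟩
      intro hmem
      rcases Nat.eq_zero_or_pos g with rfl | hgpos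
      · rw [hR0] at hmem; simp at hmem
      · have hlt : g - 1 < Nat.find hd := by omega
        have := Nat.find_min hd hlt
        push_neg at this
        exact absurd hmem (by
          have h2 := this (by omega)
          rwa [show g - 1 + 1 = g by omega] at h2)
    · rintro ⟨hmem, hnmem⟩
      have hi : i < 3 * n := by
        have : i ∈ R n := hle' (g+1) n (by omega) (le_refl n) hmem
        rw [hRn] at this
        exact Finset.mem_range.1 this
      refine ⟨hi, ?_⟩
      have hd : ∃ g', g' < n ∧ i ∈ R (g' + 1) := ⟨g, hg, hmem⟩
      rw [hf]
      simp only
      rw [dif_pos hd]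
      have hub : Nat.find hd ≤ g := Nat.find_le ⟨hg, hmem⟩
      rcases Nat.eq_or_lt_of_le hub with he | hlt
      · exact he
      · exfalso
        have hspec := Nat.find_spec hd
        have : i ∈ R g := hle' (Nat.find hd + 1) g (by omega) (by omega) hspec.2
        exact hnmem this
  refine ⟨f, hf1, ?_⟩
  intro g hg
  rw [hfilter g hg]
  have hsub := hmono g hg
  have hsdiff : (R (g+1) \ R g).sum a + (R g).sum a = (R (g+1)).sum a :=
    Finset.sum_sdiff hsub
  have hs1 : (R g).sum a = g * T := hsumR g (by omega)
  have hs2 : (R (g+1)).sum a = (g+1) * T := hsumR (g+1) (by omega)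
  have hsT : (R (g+1) \ R g).sum a = T := by
    rw [hs1, hs2] at hsdiff
    have : (g+1) * T = g * T + T := by ring
    omega
  have hmem_bound : ∀ i ∈ R (g+1) \ R g, T < 4 * a i ∧ 2 * a i < T := by
    intro i hi
    have hiR : i ∈ R (g+1) := (Finset.mem_sdiff.1 hi).1
    have : i ∈ R n := hle' (g+1) n (by omega) (le_refl n) hiR
    rw [hRn] at this
    exact hbound i (Finset.mem_range.1 this)
  set B := R (g+1) \ R g with hB
  have hcard : B.card = 3 := by
    have hne : B.Nonempty := by
      rcases Finset.eq_empty_or_nonempty B with he | hne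
      · rw [he] at hsT; simp at hsT; omega
      · exact hne
    have h4 : B.card * (T + 1) ≤ 4 * T := by
      calc B.card * (T+1) = ∑ _i ∈ B, (T+1) := by rw [Finset.sum_const, smul_eq_mul]
      _ ≤ ∑ i ∈ B, 4 * a i := Finset.sum_le_sum (fun i hi => by
          have := (hmem_bound i hi).1; omega)
      _ = 4 * ∑ i ∈ B, a i := by rw [Finset.mul_sum]
      _ = 4 * T := by rw [hsT]
    have h2 : 2 * T ≤ B.card * (T - 1) := by
      calc 2 * T = 2 * ∑ i ∈ B, a i := by rw [hsT]
      _ = ∑ i ∈ B, 2 * a i := by rw [Finset.mul_sum]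
      _ ≤ ∑ _i ∈ B, (T - 1) := Finset.sum_le_sum (fun i hi => by
          have := (hmem_bound i hi).2; omega)
      _ = B.card * (T - 1) := by rw [Finset.sum_const, smul_eq_mul]
    by_contra hm3
    rcases Nat.lt_or_ge B.card 3 with hlt | hge
    · have : B.card * (T - 1) ≤ 2 * (T - 1) := Nat.mul_le_mul_right _ (by omega)
      omega
    · have hge4 : 4 ≤ B.card := by omega
      have : 4 * (T + 1) ≤ B.card * (T + 1) := Nat.mul_le_mul_right _ hge4
      omega
  exact ⟨hcard, hsT⟩

lemma partC (r n T : ℕ) (hr : 1 ≤ r) (hn : 0 < n) (hT : 0 < T) (a : ℕ → ℕ)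
    (hpos : ∀ i < 3 * n, 0 < a i)
    (hsum : ∑ i ∈ Finset.range (3 * n), a i = n * T)
    (hbound : ∀ i < 3 * n, T < 4 * a i ∧ 2 * a i < T)
    (s : ℕ) (hs1 : 1 ≤ s) (hsr : s ≤ r)
    (hsolv : Solvable (GMconf n T a r s)) : HasPartition n T a := by
  obtain ⟨Cf, hreach, hemp⟩ := hsolv
  set C₀ := GMconf n T a r s with hC0
  have hQlen := Q0_len n T a r s
  have hrT : 1 ≤ r * T := Nat.mul_le_mul hr hT
  -- chain of snapshot configurations
  have key : ∀ g, g ≤ n → ∃ D : ℕ → Config, D 0 = C₀ ∧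
      (∀ k ≤ g, Relation.ReflTransGen Step C₀ (D k) ∧
        Relation.ReflTransGen Step (D k) Cf ∧
        (D k).Q.length = C₀.Q.length - 2*k*(r*T) ∧
        (1 ≤ k → parked 0 (D k) + 1 ≤ s)) ∧
      (∀ k, k + 1 ≤ g → (D (k+1)).V ⊆ (D k).V) := by
    intro g
    induction g with
    | zero =>
      intro _
      refine ⟨fun _ => C₀, rfl, ?_, by omega⟩
      intro k hk
      obtain rfl : k = 0 := by omega
      exact ⟨.refl, hreach, by simp, by omega⟩
    | succ g ih =>
      intro hg1
      obtain ⟨D, hD0, hprop, hmono⟩ := ih (by omega)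
      obtain ⟨hr1, hr2, hl, -⟩ := hprop g (le_refl g)
      have hCfQ : Cf.Q.length = 0 := by rw [hemp.2.1]; rfl
      have h2g1 : 2*(g+1)*(r*T) ≤ C₀.Q.length := by
        rw [hQlen]
        calc 2*(g+1)*(r*T) ≤ 2*n*(r*T) := Nat.mul_le_mul_right _ (by omega)
        _ = n * (2*(r*T)) := by ring
      have hmono2 : 2*g*(r*T) ≤ 2*(g+1)*(r*T) := Nat.mul_le_mul_right _ (by omega)
      obtain ⟨C', hc1, hc2, hc3, hc4⟩ := crossing hr2
        (C₀.Q.length - 2*(g+1)*(r*T)) (by omega) (by rw [hl]; omega)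
      have hauto : ∃ C'', Relation.ReflTransGen Step (D g) C'' ∧ AutoStep C'' C' := by
        rcases hc4 with h | h
        · exfalso
          rw [hl] at h
          have h2g : 2*g*(r*T) ≤ 2*(g+1)*(r*T) := Nat.mul_le_mul_right _ (by omega)
          have : 2*(g+1)*(r*T) = 2*g*(r*T) + 2*(r*T) := by ring
          omega
        · exact h
      obtain ⟨C'', hcc1, hcc2⟩ := hauto
      have hinvC'' : BOInv n T r s a C'' :=
        inv_reach n T r s a hsum (hr1.trans hcc1)
      have hpb : parked 0 C' + 1 ≤ s := parked_bound hinvC'' hcc2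
      refine ⟨fun k => if k = g + 1 then C' else D k, by simp [hD0], ?_, ?_⟩
      · intro k hk
        by_cases hke : k = g + 1
        · subst hke
          simp only [if_pos rfl]
          exact ⟨hr1.trans hc1, hc2, hc3, fun _ => hpb⟩
        · simp only [if_neg hke]
          exact hprop k (by omega)
      · intro k hk1
        by_cases hke : k + 1 = g + 1
        · obtain rfl : k = g := by omega
          simp only [if_pos rfl, if_neg (show ¬ k = k + 1 by omega)]
          exact rtg_V_mono hc1
        · simp only [if_neg hke, if_neg (by omega : ¬ k = g + 1)]
          exact hmono k (by omega)
  obtain ⟨D, hD0, hprop, hmono⟩ := key n (le_refl n)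
  set R : ℕ → Finset ℕ := fun g => Rset n r a (D g) with hRdef
  -- R 0 = ∅
  have hR0 : R 0 = ∅ := by
    rw [hRdef]
    simp only
    rw [hD0, Rset]
    apply Finset.filter_false_of_mem
    intro i hi
    rw [Finset.mem_range] at hi
    have hpos' : 0 < r * a i := Nat.mul_le_mul hr (hpos i hi)
    have h0 : (0:ℕ) ∈ (Finset.range (r*a i)).filter (fun j => Nat.pair i j ∈ C₀.V) := by
      rw [Finset.mem_filter, Finset.mem_range]
      exact ⟨hpos', mem_V0.2 ⟨hi, by omega⟩⟩
    have := Finset.card_pos.2 ⟨0, h0⟩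
    omega
  -- V (D n) = ∅ hence R n = range
  have hDn := hprop n (le_refl n)
  have hinvDn : BOInv n T r s a (D n) := inv_reach n T r s a hsum hDn.1
  have hinvCf : BOInv n T r s a Cf := inv_reach n T r s a hsum hreach
  have hDnQ : (D n).Q = [] := by
    have hlen2 := hDn.2.2.1
    rw [hC0, hQlen] at hlen2
    apply List.length_eq_zero_iff.1
    rw [hlen2]
    have h1 : 2*n*(r*T) = n*(2*(r*T)) := by ring
    omega
  have hVDn : (D n).V = ∅ := by
    apply V_empty_of_Q_empty hDn.2.1 hDnQ hemp
    rw [hinvCf.slen, hinvDn.slen]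
  have hRn : R n = Finset.range (3 * n) := by
    rw [hRdef]
    simp only
    rw [Rset]
    apply Finset.filter_true_of_mem
    intro i hi
    rw [hVDn]
    simp
  -- monotonicity
  have hmonoR : ∀ g, g < n → R g ⊆ R (g + 1) := by
    intro g hg
    exact Rset_mono (hmono g (by omega))
  -- sums
  have hsumR : ∀ g ≤ n, (R g).sum a = g * T := by
    intro g hg
    rcases Nat.eq_zero_or_pos g with rfl | hgpos
    · rw [hR0]; simp
    · obtain ⟨h1, h2, h3, h4⟩ := hprop g hg
      exact snapshot_sum n T r s a hT hr hsum (inv_reach n T r s a hsum h1) g hg h3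
        (h4 hgpos) hsr
  exact partition_of_chain n T a hn hT hbound R hR0 hRn hmonoR hsumR
/-- Non-approximability gap: for the `r`-scaled reduction instance, a
3-partition makes one spot suffice (so the least sufficient number of spots
is `1`), while absence of a 3-partition makes even `r` spots insufficient
(so the least sufficient number of spots exceeds `r`). -/
theorem gap_instance (r n T : ℕ) (hr : 1 ≤ r) (hn : 0 < n) (hT : 0 < T)
    (a : ℕ → ℕ) (hpos : ∀ i < 3 * n, 0 < a i)
    (hsum : ∑ i ∈ Finset.range (3 * n), a i = n * T)
    (hbound : ∀ i < 3 * n, T < 4 * a i ∧ 2 * a i < T) :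
    (HasPartition n T a →
      Solvable (GMconf n T a r 1) ∧
      ∀ s, Solvable (GMconf n T a r s) → 1 ≤ s) ∧
    (¬ HasPartition n T a →
      ∀ s, 1 ≤ s → s ≤ r → ¬ Solvable (GMconf n T a r s)) := by
  constructor
  · intro hp
    exact ⟨partA_solvable r n T a hp, partA_lower r n T hn hT hr a hpos⟩
  · intro hnp s hs1 hsr hsolv
    exact hnp (partC r n T hr hn hT a hpos hsum hbound s hs1 hsr hsolv)
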